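/- arXiv:1501.02605 — 5 statements merged into one kernel-verified Lean document; each statement's English description precedes it below -/
import Mathlib

section
/- For all integers m ≥ 1, 1 ≤ i ≤ m, n ≥ 0 and k ≥ 1, one has A_{n,k}^{(m,i)} = (n! / (m · (i/m)_{n+1})) · B_{n,k−1}^{(m,i)}, where A_{n,k}^{(m,i)} = ∑_{j=0}^{n} (−1)^j · C(n,j) / (m·j + i)^k. -/
/-- The numbers `B_{n,k}^{(m,i)}`: `Bnum m i k n = B_{n,k}^{(m,i)}`, defined by
`B_{n,0} = 1` and `B_{n,k} = ∑_{j=0}^{n} B_{j,k−1}/(m·j+i)` for `k ≥ 1`. -/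
noncomputable def Bnum (m i : ℕ) : ℕ → ℕ → ℝ
  | 0, _ => 1
  | (k+1), n => ∑ j ∈ Finset.range (n + 1), Bnum m i k j / ((m : ℝ) * j + i)

/-! With `x = i / m` one has `m * j + i = m * (x + j)`, so everything reduces to `BnumAt x`, the
recursion of `Bnum` with `m * j + i` replaced by `x + j`. For `k = 1` the claim is the partial
fraction expansion of `n! / (x)_{n+1}`, which up to the sign `(-1)^n` is the `n`-th forward
difference of `t ↦ t⁻¹` at `x`. The induction on `k` swaps the two sums in the recursion and
evaluates the inner one by `∑_{j ≤ n} C(j, r) (x)_j / j! = C(n, r) (x)_{n+1} / (n! (x + r))`. -/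

open Finset fwdDiff

section

variable {K : Type*} [Field K]

noncomputable def BnumAt (x : K) : ℕ → ℕ → K
  | 0, _ => 1
  | k + 1, n => ∑ j ∈ range (n + 1), BnumAt x k j / (x + j)

lemma prod_range_add_natCast_ne_zero {x : K} (hx : ∀ j : ℕ, x + j ≠ 0) (n : ℕ) :
    ∏ l ∈ range n, (x + l) ≠ 0 :=
  prod_ne_zero_iff.2 fun l _ => hx l

lemma prod_range_add_one_add_mul (x : K) (n : ℕ) :
    (∏ l ∈ range n, (x + 1 + l)) * x = ∏ l ∈ range (n + 1), (x + l) := by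
  rw [prod_range_succ']
  push_cast
  simp only [add_zero, add_assoc, add_comm (1 : K)]

lemma fwdDiff_iter_inv {x : K} (hx : ∀ j : ℕ, x + j ≠ 0) (n : ℕ) :
    Δ_[1] ^[n] (fun t : K => t⁻¹) x
      = (-1) ^ n * n.factorial / ∏ l ∈ range (n + 1), (x + l) := by
  induction n generalizing x with
  | zero => simp
  | succ n ih =>
    have hx1 : ∀ j : ℕ, x + 1 + j ≠ 0 := fun j => by
      simpa [add_assoc, add_comm (1 : K)] using hx (j + 1)
    rw [Function.iterate_succ_apply', fwdDiff, ih hx1, ih hx]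
    have hshift := prod_range_add_one_add_mul x (n + 1)
    have hlast := prod_range_succ (fun l : ℕ => x + l) (n + 1)
    have hQ := prod_range_add_natCast_ne_zero hx1 (n + 1)
    have hP := prod_range_add_natCast_ne_zero hx (n + 1)
    have hn := hx (n + 1)
    rw [hlast] at hshift ⊢
    rw [Nat.factorial_succ]
    push_cast at hn hshift ⊢
    field_simp
    linear_combination -(-1) ^ n * (n.factorial : K) * hshift

theorem sum_neg_one_pow_mul_choose_div_add {x : K} (hx : ∀ j : ℕ, x + j ≠ 0) (n : ℕ) :
    ∑ r ∈ range (n + 1), (-1) ^ r * (n.choose r : K) / (x + r)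
      = n.factorial / ∏ l ∈ range (n + 1), (x + l) := by
  have h := fwdDiff_iter_eq_sum_shift 1 (fun t : K => t⁻¹) n x
  rw [fwdDiff_iter_inv hx] at h
  calc ∑ r ∈ range (n + 1), (-1) ^ r * (n.choose r : K) / (x + r)
      = (-1) ^ n * ∑ r ∈ range (n + 1), ((-1 : ℤ) ^ (n - r) * n.choose r) • (x + r • 1)⁻¹ := by
        rw [mul_sum]
        refine sum_congr rfl fun r hr => ?_
        have hsign : (-1 : K) ^ n * (-1) ^ (n - r) = (-1) ^ r := by
          rw [← Nat.add_sub_of_le (Nat.lt_succ_iff.1 (mem_range.1 hr)), Nat.add_sub_cancel_left,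
            pow_add, mul_assoc, ← mul_pow]
          simp
        simp only [zsmul_eq_mul, nsmul_eq_mul, mul_one]
        push_cast
        rw [← mul_assoc, ← mul_assoc, hsign, div_eq_mul_inv]
    _ = n.factorial / ∏ l ∈ range (n + 1), (x + l) := by
        rw [← h, ← mul_div_assoc, ← mul_assoc, ← mul_pow]
        simp

lemma Nat.add_one_mul_choose_add_mul_choose_eq (n r : ℕ) :
    (n + 1) * n.choose r + r * (n + 1).choose r = (n + 1) * (n + 1).choose r := by
  rcases r with _ | s
  · simp
  · have h := Nat.add_one_mul_choose_eq n s
    rw [Nat.choose_succ_succ] at h ⊢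
    linarith

variable [CharZero K]

lemma sum_choose_mul_prod_div_factorial {x : K} (hx : ∀ j : ℕ, x + j ≠ 0) (r n : ℕ) :
    ∑ j ∈ range (n + 1), (j.choose r : K) * (∏ l ∈ range j, (x + l)) / j.factorial
      = (n.choose r : K) * (∏ l ∈ range (n + 1), (x + l)) / (n.factorial * (x + r)) := by
  induction n with
  | zero =>
    rcases r with _ | r
    · simpa using (div_self (by simpa using hx 0)).symm
    · simp
  | succ n ih =>
    have hchoose :
        ((n + 1) * n.choose r + r * (n + 1).choose r : K) = (n + 1) * (n + 1).choose r := by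
      exact_mod_cast Nat.add_one_mul_choose_add_mul_choose_eq n r
    have hr := hx r
    have hn := hx (n + 1)
    have hP := prod_range_add_natCast_ne_zero hx (n + 1)
    have hf : (n.factorial : K) ≠ 0 := Nat.cast_ne_zero.2 n.factorial_ne_zero
    rw [sum_range_succ, ih, prod_range_succ _ (n + 1), Nat.factorial_succ]
    push_cast at hn ⊢
    field_simp
    linear_combination hchoose

theorem BnumAt_eq_prod_div_factorial_mul_sum {x : K} (hx : ∀ j : ℕ, x + j ≠ 0) : ∀ k n : ℕ,
    BnumAt x k n = (∏ l ∈ range (n + 1), (x + l)) / n.factorial *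
      ∑ r ∈ range (n + 1), (-1) ^ r * (n.choose r : K) / (x + r) ^ (k + 1)
  | 0, n => by
    simp only [BnumAt, zero_add, pow_one, sum_neg_one_pow_mul_choose_div_add hx]
    field_simp [prod_range_add_natCast_ne_zero hx, Nat.cast_ne_zero.2 n.factorial_ne_zero]
  | k + 1, n => by
    -- `(x)_{j+1} / (x + j) = (x)_j`, and the range is extended using `C(j, r) = 0` for `r > j`.
    have hterm : ∀ j ∈ range (n + 1), BnumAt x k j / (x + j) =
        ∑ r ∈ range (n + 1), (-1) ^ r / (x + r) ^ (k + 1) *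
          ((j.choose r : K) * (∏ l ∈ range j, (x + l)) / j.factorial) := by
      intro j hj
      have hjn : j + 1 ≤ n + 1 := mem_range.1 hj
      rw [← sum_subset (range_subset_range.2 hjn) fun r _ hr => by
        rw [Nat.choose_eq_zero_of_lt (by simpa [Nat.lt_succ_iff] using hr)]
        simp]
      rw [BnumAt_eq_prod_div_factorial_mul_sum hx k j, prod_range_succ, mul_sum, sum_div]
      refine sum_congr rfl fun r _ => ?_
      have := hx j
      have : (j.factorial : K) ≠ 0 := Nat.cast_ne_zero.2 j.factorial_ne_zero
      field_simp
    calc BnumAt x (k + 1) n = ∑ j ∈ range (n + 1), BnumAt x k j / (x + j) := rfl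
      _ = ∑ r ∈ range (n + 1), (-1) ^ r / (x + r) ^ (k + 1) *
            ∑ j ∈ range (n + 1), (j.choose r : K) * (∏ l ∈ range j, (x + l)) / j.factorial := by
        rw [sum_congr rfl hterm, sum_comm]
        simp_rw [mul_sum]
      _ = _ := by
        simp_rw [sum_choose_mul_prod_div_factorial hx, mul_sum]
        refine sum_congr rfl fun r _ => ?_
        have := hx r
        have : (n.factorial : K) ≠ 0 := Nat.cast_ne_zero.2 n.factorial_ne_zero
        field_simp
        ring

end

lemma Bnum_eq_BnumAt_div_pow {m : ℕ} (hm : m ≠ 0) (i : ℕ) : ∀ k n : ℕ,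
    Bnum m i k n = BnumAt ((i : ℝ) / m) k n / (m : ℝ) ^ k
  | 0, n => by simp [Bnum, BnumAt]
  | k + 1, n => by
    simp only [Bnum, BnumAt, sum_div, Bnum_eq_BnumAt_div_pow hm i k]
    refine sum_congr rfl fun j _ => ?_
    have : (m : ℝ) ≠ 0 := by exact_mod_cast hm
    rw [show (m : ℝ) * j + i = m * (i / m + j) by field_simp; ring, pow_succ, div_div, div_div]
    congr 1
    ring

theorem stmt1_general (m i : ℕ) (hm : 1 ≤ m) (hi1 : 1 ≤ i) (n k : ℕ) (hk : 1 ≤ k) :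
    (∑ j ∈ Finset.range (n + 1), (-1 : ℝ) ^ j * (n.choose j) / ((m : ℝ) * j + i) ^ k)
      = ((n.factorial : ℝ) / ((m : ℝ) * ∏ j ∈ Finset.range (n + 1), ((i : ℝ) / m + j)))
        * Bnum m i (k - 1) n := by
  obtain ⟨k, rfl⟩ := Nat.exists_eq_add_of_le' hk
  have hm0 : (m : ℝ) ≠ 0 := by positivity
  have hx : ∀ j : ℕ, (i : ℝ) / m + j ≠ 0 := fun j =>
    (add_pos_of_pos_of_nonneg (by positivity) j.cast_nonneg).ne'
  have hscale : ∀ j ∈ range (n + 1), (-1 : ℝ) ^ j * (n.choose j) / ((m : ℝ) * j + i) ^ (k + 1)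
      = (-1) ^ j * (n.choose j) / ((i : ℝ) / m + j) ^ (k + 1) / (m : ℝ) ^ (k + 1) := by
    intro j _
    rw [show (m : ℝ) * j + i = m * (i / m + j) by field_simp; ring, mul_pow, div_div,
      mul_comm ((m : ℝ) ^ (k + 1))]
  rw [sum_congr rfl hscale, ← sum_div, Nat.add_sub_cancel, Bnum_eq_BnumAt_div_pow (by omega),
    BnumAt_eq_prod_div_factorial_mul_sum hx]
  have hP := prod_range_add_natCast_ne_zero hx (n + 1)
  have : (n.factorial : ℝ) ≠ 0 := Nat.cast_ne_zero.2 n.factorial_ne_zero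
  field_simp
  ring

/-- For all integers `m ≥ 1`, `1 ≤ i ≤ m`, `n ≥ 0` and `k ≥ 1`,
`A_{n,k}^{(m,i)} = (n!/(m·(i/m)_{n+1})) · B_{n,k−1}^{(m,i)}`, where
`A_{n,k}^{(m,i)} = ∑_{j=0}^{n} (−1)^j C(n,j)/(m·j+i)^k`. -/
theorem stmt1 (m i : ℕ) (hm : 1 ≤ m) (hi1 : 1 ≤ i) (him : i ≤ m) (n k : ℕ) (hk : 1 ≤ k) :
    (∑ j ∈ Finset.range (n + 1), (-1 : ℝ) ^ j * (n.choose j) / ((m : ℝ) * j + i) ^ k)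
      = ((n.factorial : ℝ) / ((m : ℝ) * ∏ j ∈ Finset.range (n + 1), ((i : ℝ) / m + j)))
        * Bnum m i (k - 1) n :=
  stmt1_general m i hm hi1 n k hk
end

section
/- For every complex number s, all integers m ≥ 1, 1 ≤ l ≤ m, and n ≥ 0, the quantities A_{n,s}^{(m,l)} = ∑_{j=0}^{n} (−1)^j · C(n,j) · (m·j + l)^{−s} satisfy the recursion A_{n+1,s}^{(m,l)} − (m(n+1)/(m(n+1)+l)) · A_{n,s}^{(m,l)} = (1/(m(n+1)+l)) · A_{n+1,s−1}^{(m,l)}. -/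
/-- For every complex `s`, integers `m ≥ 1`, `1 ≤ l ≤ m`, `n ≥ 0`, the
quantities `A_{n,s}^{(m,l)} = ∑_{j=0}^{n} (−1)^j C(n,j) (m·j+l)^{−s}` satisfy
`A_{n+1,s} − (m(n+1)/(m(n+1)+l)) A_{n,s} = (1/(m(n+1)+l)) A_{n+1,s−1}`. -/
theorem stmt2 (s : ℂ) (m l : ℕ) (hm : 1 ≤ m) (hl1 : 1 ≤ l) (hlm : l ≤ m) (n : ℕ) :
    (∑ j ∈ Finset.range (n + 2), (-1 : ℂ) ^ j * ((n + 1).choose j) * ((m * j + l : ℕ) : ℂ) ^ (-s))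
      - ((m : ℂ) * (n + 1) / ((m : ℂ) * (n + 1) + l))
        * (∑ j ∈ Finset.range (n + 1), (-1 : ℂ) ^ j * (n.choose j) * ((m * j + l : ℕ) : ℂ) ^ (-s))
      = (1 / ((m : ℂ) * (n + 1) + l))
        * (∑ j ∈ Finset.range (n + 2),
            (-1 : ℂ) ^ j * ((n + 1).choose j) * ((m * j + l : ℕ) : ℂ) ^ (-(s - 1))) := by
  set d : ℂ := (m : ℂ) * (n + 1) + l with hdd
  have hdn : d = ((m * (n + 1) + l : ℕ) : ℂ) := by push_cast; ring
  have hd : d ≠ 0 := by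
    rw [hdn]
    exact Nat.cast_ne_zero.mpr (by omega)
  -- extend the middle sum to range (n+2); the extra term vanishes
  have hext : (∑ j ∈ Finset.range (n + 1),
        (-1 : ℂ) ^ j * (n.choose j) * ((m * j + l : ℕ) : ℂ) ^ (-s))
      = ∑ j ∈ Finset.range (n + 2),
        (-1 : ℂ) ^ j * (n.choose j) * ((m * j + l : ℕ) : ℂ) ^ (-s) := by
    rw [Finset.sum_range_succ (n := n + 1)]
    simp [Nat.choose_succ_self]
  have key : d * (∑ j ∈ Finset.range (n + 2),
        (-1 : ℂ) ^ j * ((n + 1).choose j) * ((m * j + l : ℕ) : ℂ) ^ (-s))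
      - (m : ℂ) * (n + 1) * (∑ j ∈ Finset.range (n + 2),
        (-1 : ℂ) ^ j * (n.choose j) * ((m * j + l : ℕ) : ℂ) ^ (-s))
      = ∑ j ∈ Finset.range (n + 2),
        (-1 : ℂ) ^ j * ((n + 1).choose j) * ((m * j + l : ℕ) : ℂ) ^ (-(s - 1)) := by
    rw [Finset.mul_sum, Finset.mul_sum, ← Finset.sum_sub_distrib]
    refine Finset.sum_congr rfl fun j hj => ?_
    have hjle : j ≤ n + 1 := by
      have := Finset.mem_range.mp hj; omega
    have hx : ((m * j + l : ℕ) : ℂ) ≠ 0 := by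
      exact Nat.cast_ne_zero.mpr (by omega)
    have hpow : ((m * j + l : ℕ) : ℂ) ^ (-(s - 1))
        = ((m * j + l : ℕ) : ℂ) ^ (-s) * ((m * j + l : ℕ) : ℂ) := by
      have h1 : -(s - 1) = -s + 1 := by ring
      rw [h1, Complex.cpow_add _ _ hx, Complex.cpow_one]
    have hcast : ((n.choose j : ℂ)) * (n + 1)
        = ((n + 1).choose j : ℂ) * ((n : ℂ) + 1 - j) := by
      have := Nat.choose_mul_succ_eq n j
      have h2 : ((n.choose j * (n + 1) : ℕ) : ℂ) = (((n + 1).choose j * (n + 1 - j) : ℕ) : ℂ) := by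
        exact_mod_cast congrArg (Nat.cast (R := ℂ)) this
      push_cast [Nat.cast_sub hjle] at h2
      push_cast
      linear_combination h2
    have hxc : ((m * j + l : ℕ) : ℂ) = (m : ℂ) * j + l := by push_cast; ring
    rw [hpow, hxc, hdd]
    linear_combination (-((-1 : ℂ) ^ j * ((m : ℂ) * j + l) ^ (-s) * (m : ℂ))) * hcast
  rw [hext]
  rw [one_div, ← key]
  field_simp
end

section
/- For all integers m ≥ 1, 1 ≤ i ≤ m, and k ≥ 1, the alternating series M_k^{(m,i)} = ∑_{j=0}^{∞} (−1)^j/(m·j+i)^k satisfies M_k^{(m,i)} = ∑_{n=0}^{∞} (n! / (2^{n+1} · m · (i/m)_{n+1})) · B_{n,k−1}^{(m,i)}, the series on the right converging. -/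
/-!
Euler's transformation: if `b` is a null sequence all of whose differences `(-Δ)ⁿ b` are
nonnegative, then `Lₙ`, the sum of the alternating series of `(-Δ)ⁿ b`, satisfies
`Lₙ = ((-Δ)ⁿ b 0 + Lₙ₊₁) / 2`, so `∑ (-1)ʲ bⱼ = ∑ (-Δ)ⁿ b 0 / 2ⁿ⁺¹`.

For `bⱼ = (m j + i)⁻ᵏ` we get `(-Δ)ⁿ b j = Tₙ,ₖ(m j + i)` with
`Tₙ,ₖ(x) = ∑ₗ (-1)ˡ C(n,l) / (m l + x)ᵏ`. Writing `m (n+1) + x = (m l + x) + m (n + 1 - l)` and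
using `C(n+1,l) (n+1-l) = (n+1) C(n,l)` gives
`(m (n+1) + x) Tₙ₊₁,ₖ₊₁ = Tₙ₊₁,ₖ + m (n+1) Tₙ,ₖ₊₁`, which is exactly the recursion of
`n! mⁿ B_{n,k}(x) / ∏_{l ≤ n} (m l + x)`. Hence these differences are nonnegative, and at `j = 0`
they are the terms of the claimed series.
-/

open Filter

open Finset Topology fwdDiff
open scoped Nat

lemma tendsto_alternating_sum_sub_shift {c : ℕ → ℝ} {L : ℝ}
    (h : Tendsto (fun N => ∑ j ∈ range N, (-1) ^ j * c j) atTop (𝓝 L)) :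
    Tendsto (fun N => ∑ j ∈ range N, (-1) ^ j * (c j - c (j + 1))) atTop (𝓝 (2 * L - c 0)) := by
  have hsplit : ∀ N, ∑ j ∈ range N, (-1) ^ j * (c j - c (j + 1))
      = ∑ j ∈ range N, (-1) ^ j * c j + (∑ j ∈ range (N + 1), (-1) ^ j * c j - c 0) := by
    intro N
    rw [sum_range_succ', pow_zero, one_mul, add_sub_cancel_right, ← sum_add_distrib]
    refine sum_congr rfl fun j _ => ?_
    ring
  simp_rw [hsplit, two_mul, add_sub_assoc]
  exact h.add ((h.comp (tendsto_add_atTop_nat 1)).sub_const _)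

lemma hasSum_of_eq_half_add_half {a L : ℕ → ℝ} {C : ℝ} (ha : ∀ n, 0 ≤ a n)
    (hL : ∀ n, |L n| ≤ C) (hrec : ∀ n, L n = (a n + L (n + 1)) / 2) :
    HasSum (fun n => a n / 2 ^ (n + 1)) (L 0) := by
  have htele : ∀ N, ∑ n ∈ range N, a n / 2 ^ (n + 1) = L 0 - L N / 2 ^ N := by
    intro N
    induction N with
    | zero => simp
    | succ N ih =>
      rw [sum_range_succ, ih, hrec N]
      field_simp
      ring
  have hrem : Tendsto (fun N => L N / 2 ^ N) atTop (𝓝 0) := by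
    have hgeom : Tendsto (fun N : ℕ => C * (1 / 2) ^ N) atTop (𝓝 0) := by
      simpa using (tendsto_pow_atTop_nhds_zero_of_lt_one (by norm_num : (0 : ℝ) ≤ 1 / 2)
        (by norm_num)).const_mul C
    refine squeeze_zero_norm (fun N => ?_) hgeom
    rw [Real.norm_eq_abs, abs_div, abs_of_pos (by positivity : (0 : ℝ) < 2 ^ N), one_div_pow,
      mul_one_div]
    exact div_le_div_of_nonneg_right (hL N) (by positivity)
  rw [hasSum_iff_tendsto_nat_of_nonneg (fun n => div_nonneg (ha n) (by positivity))]
  simpa [htele] using hrem.const_sub (L 0)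

theorem exists_hasSum_euler_transform {b : ℕ → ℝ}
    (hb : ∀ n j, 0 ≤ (-1) ^ n * (Δ_[1])^[n] b j) (hb0 : Tendsto b atTop (𝓝 0)) :
    ∃ L, HasSum (fun n => (-1) ^ n * (Δ_[1])^[n] b 0 / 2 ^ (n + 1)) L ∧
      Tendsto (fun N => ∑ j ∈ range N, (-1) ^ j * b j) atTop (𝓝 L) := by
  set f : ℕ → ℕ → ℝ := fun n j => (-1) ^ n * (Δ_[1])^[n] b j with hf
  have hf_succ : ∀ n, f (n + 1) = fun j => f n j - f n (j + 1) := by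
    intro n
    ext j
    simp only [hf, Function.iterate_succ_apply', fwdDiff]
    ring
  have hf_nonneg : ∀ n j, 0 ≤ f n j := hb
  have hf_anti : ∀ n, Antitone (f n) := fun n =>
    antitone_nat_of_succ_le fun j =>
      sub_nonneg.mp (by simpa only [hf_succ] using hf_nonneg (n + 1) j)
  have hf_le : ∀ n j, f n j ≤ b j := by
    intro n
    induction n with
    | zero => simp [hf]
    | succ n ih =>
      intro j
      rw [hf_succ]
      dsimp only
      linarith [ih j, hf_nonneg n (j + 1)]
  have hf_lim : ∀ n, Tendsto (f n) atTop (𝓝 0) := fun n =>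
    squeeze_zero (hf_nonneg n) (hf_le n) hb0
  choose L hL using fun n => (hf_anti n).tendsto_alternating_series_of_tendsto_zero (hf_lim n)
  have hL_nonneg : ∀ n, 0 ≤ L n := fun n => by
    simpa using (hf_anti n).alternating_series_le_tendsto (hL n) 0
  have hL_le : ∀ n, L n ≤ f n 0 := fun n => by
    simpa using (hf_anti n).tendsto_le_alternating_series (hL n) 0
  have hL_succ : ∀ n, L (n + 1) = 2 * L n - f n 0 := fun n =>
    tendsto_nhds_unique (hL (n + 1))
      (by rw [hf_succ]; exact tendsto_alternating_sum_sub_shift (hL n))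
  refine ⟨L 0, hasSum_of_eq_half_add_half (C := b 0) (fun n => hf_nonneg n 0) (fun n => ?_)
    (fun n => by rw [hL_succ]; ring), by simpa [hf] using hL 0⟩
  rw [abs_of_nonneg (hL_nonneg n)]
  exact (hL_le n).trans (hf_le n 0)

lemma neg_one_pow_mul_fwdDiff_iter (b : ℕ → ℝ) (n j : ℕ) :
    (-1) ^ n * (Δ_[1])^[n] b j = ∑ l ∈ range (n + 1), (-1) ^ l * n.choose l * b (j + l) := by
  rw [fwdDiff_iter_eq_sum_shift, mul_sum]
  refine sum_congr rfl fun l hl => ?_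
  have hsign : (-1 : ℝ) ^ n * (-1) ^ (n - l) = (-1) ^ l := by
    obtain ⟨d, rfl⟩ := Nat.exists_eq_add_of_le (Nat.lt_succ_iff.mp (mem_range.mp hl))
    rw [Nat.add_sub_cancel_left, pow_add, mul_assoc, ← pow_add, ← two_mul, pow_mul, neg_one_sq,
      one_pow, mul_one]
  simp only [zsmul_eq_mul, smul_eq_mul, mul_one]
  push_cast
  linear_combination (n.choose l * b (j + l) : ℝ) * hsign

/-- `Bnum` with real `m` and `x` in place of `i`: the differences of `j ↦ (m j + i)⁻ᵏ` at `j`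
involve `B_{n,k}` at `x = m j + i`. -/
noncomputable def Breal (m x : ℝ) : ℕ → ℕ → ℝ
  | 0, _ => 1
  | k + 1, n => ∑ j ∈ range (n + 1), Breal m x k j / (m * j + x)

lemma Bnum_eq_Breal (m i : ℕ) : ∀ k n, Bnum m i k n = Breal m i k n
  | 0, _ => rfl
  | k + 1, n => sum_congr rfl fun j _ => by rw [Bnum_eq_Breal m i k j]

section Breal

variable {m x : ℝ}

lemma Breal_zero_left (n : ℕ) : Breal m x 0 n = 1 := rfl

lemma Breal_zero_right (k : ℕ) : Breal m x k 0 = (x ^ k)⁻¹ := by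
  induction k with
  | zero => simp [Breal]
  | succ k ih =>
    rw [Breal, sum_range_one, ih, Nat.cast_zero, mul_zero, zero_add, pow_succ, mul_inv,
      div_eq_mul_inv]

lemma Breal_succ_succ (k n : ℕ) :
    Breal m x (k + 1) (n + 1)
      = Breal m x (k + 1) n + Breal m x k (n + 1) / (m * (n + 1) + x) := by
  rw [Breal, sum_range_succ, Breal]
  push_cast
  rfl

lemma Breal_nonneg (hm : 0 ≤ m) (hx : 0 < x) : ∀ k n, 0 ≤ Breal m x k n
  | 0, _ => zero_le_one
  | k + 1, _ => sum_nonneg fun j _ => div_nonneg (Breal_nonneg hm hx k j) (by positivity)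

end Breal

noncomputable def alternatingChooseSum (m x : ℝ) (k n : ℕ) : ℝ :=
  ∑ l ∈ range (n + 1), (-1) ^ l * n.choose l / (m * l + x) ^ k

lemma cast_choose_succ_mul_sub (n l : ℕ) :
    ((n + 1).choose l : ℝ) * ((n : ℝ) + 1 - l) = (n + 1) * n.choose l := by
  rcases le_or_gt l (n + 1) with hl | hl
  · have h := Nat.choose_mul_succ_eq n l
    rw [← Nat.cast_inj (R := ℝ)] at h
    push_cast [Nat.cast_sub hl] at h
    linarith
  · rw [Nat.choose_eq_zero_of_lt hl, Nat.choose_eq_zero_of_lt (by omega)]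
    simp

lemma prod_mul_add_eq_pow_mul_prod {m : ℝ} (hm : m ≠ 0) (x : ℝ) (n : ℕ) :
    ∏ l ∈ range (n + 1), (m * l + x) = m ^ (n + 1) * ∏ l ∈ range (n + 1), (x / m + l) := by
  calc ∏ l ∈ range (n + 1), (m * l + x) = ∏ l ∈ range (n + 1), (m * (x / m + l)) :=
        prod_congr rfl fun l _ => by field_simp; ring
    _ = m ^ (n + 1) * ∏ l ∈ range (n + 1), (x / m + l) := by
        rw [prod_mul_distrib, prod_const, card_range]

section alternatingChooseSum

variable {m x : ℝ}

lemma alternatingChooseSum_zero_left (n : ℕ) : alternatingChooseSum m x 0 (n + 1) = 0 := by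
  simpa [alternatingChooseSum] using
    congrArg (Int.cast : ℤ → ℝ) (Int.alternating_sum_range_choose_of_ne n.succ_ne_zero)

lemma alternatingChooseSum_zero_right (k : ℕ) : alternatingChooseSum m x k 0 = (x ^ k)⁻¹ := by
  simp [alternatingChooseSum]

lemma alternatingChooseSum_succ_succ (hx : ∀ l : ℕ, m * l + x ≠ 0) (k n : ℕ) :
    (m * (n + 1) + x) * alternatingChooseSum m x (k + 1) (n + 1)
      = alternatingChooseSum m x k (n + 1) + m * (n + 1) * alternatingChooseSum m x (k + 1) n := by
  have hterm : ∀ l : ℕ,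
      (m * (n + 1) + x) * ((-1) ^ l * (n + 1).choose l / (m * l + x) ^ (k + 1))
        = (-1) ^ l * (n + 1).choose l / (m * l + x) ^ k
          + m * ((-1) ^ l * (((n + 1).choose l : ℝ) * ((n : ℝ) + 1 - l))
            / (m * l + x) ^ (k + 1)) := by
    intro l
    have hl := hx l
    field_simp
    ring
  have hlast : ∑ l ∈ range (n + 1 + 1),
      m * ((-1) ^ l * (((n + 1).choose l : ℝ) * ((n : ℝ) + 1 - l)) / (m * l + x) ^ (k + 1))
        = m * (n + 1) * alternatingChooseSum m x (k + 1) n := by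
    simp only [cast_choose_succ_mul_sub]
    rw [sum_range_succ, Nat.choose_succ_self, alternatingChooseSum, mul_sum]
    simp only [Nat.cast_zero, mul_zero, zero_div, add_zero]
    refine sum_congr rfl fun l _ => ?_
    ring
  rw [← hlast, alternatingChooseSum, alternatingChooseSum, mul_sum, ← sum_add_distrib]
  exact sum_congr rfl fun l _ => hterm l

theorem prod_mul_alternatingChooseSum (hx : ∀ l : ℕ, m * l + x ≠ 0) (n k : ℕ) :
    (∏ l ∈ range (n + 1), (m * l + x)) * alternatingChooseSum m x (k + 1) n
      = n ! * m ^ n * Breal m x k n := by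
  induction n generalizing k with
  | zero =>
    have hx0 : x ≠ 0 := by simpa using hx 0
    simp only [zero_add, range_one, prod_singleton, alternatingChooseSum_zero_right,
      Breal_zero_right]
    push_cast
    field_simp
    ring
  | succ n ih =>
    have hc := hx (n + 1)
    push_cast at hc
    have hrec := alternatingChooseSum_succ_succ hx
    rw [prod_range_succ, Nat.factorial_succ]
    push_cast
    induction k with
    | zero =>
      have := hrec 0 n
      rw [alternatingChooseSum_zero_left] at this
      have ih0 := ih 0
      rw [Breal_zero_left] at ih0 ⊢
      linear_combination (∏ l ∈ range (n + 1), (m * l + x)) * this + m * (n + 1) * ih0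
    | succ k ihk =>
      rw [Breal_succ_succ]
      have hdiv : (∏ l ∈ range (n + 1), (m * l + x)) * alternatingChooseSum m x (k + 1) (n + 1)
          = ((n + 1) * n ! * m ^ (n + 1)) * (Breal m x k (n + 1) / (m * (n + 1) + x)) := by
        rw [← mul_div_assoc, ← ihk, eq_div_iff hc]
        ring
      linear_combination (∏ l ∈ range (n + 1), (m * l + x)) * hrec (k + 1) n
        + hdiv + m * (n + 1) * ih (k + 1)

lemma alternatingChooseSum_nonneg (hm : 0 ≤ m) (hx : 0 < x) (k n : ℕ) :
    0 ≤ alternatingChooseSum m x (k + 1) n := by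
  have hP : 0 < ∏ l ∈ range (n + 1), (m * l + x) := prod_pos fun l _ => by positivity
  refine (mul_nonneg_iff_of_pos_left hP).mp ?_
  rw [prod_mul_alternatingChooseSum (fun l => by positivity)]
  have := Breal_nonneg hm hx k n
  positivity

lemma alternatingChooseSum_eq_factorial_div (hm : 0 < m) (hx : 0 < x) (k n : ℕ) :
    alternatingChooseSum m x (k + 1) n
      = n ! / (m * ∏ l ∈ range (n + 1), (x / m + l)) * Breal m x k n := by
  have hQ : 0 < ∏ l ∈ range (n + 1), (x / m + l) := prod_pos fun l _ => by positivity
  have h := prod_mul_alternatingChooseSum (fun l => by positivity) n k (m := m) (x := x)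
  rw [prod_mul_add_eq_pow_mul_prod hm.ne'] at h
  rw [div_mul_eq_mul_div, eq_div_iff (by positivity)]
  refine mul_left_cancel₀ (pow_ne_zero n hm.ne') ?_
  linear_combination h

lemma neg_one_pow_mul_fwdDiff_iter_inv_pow (k n j : ℕ) :
    (-1) ^ n * (Δ_[1])^[n] (fun j : ℕ => ((m * j + x) ^ k)⁻¹) j
      = alternatingChooseSum m (m * j + x) k n := by
  rw [neg_one_pow_mul_fwdDiff_iter, alternatingChooseSum]
  refine sum_congr rfl fun l _ => ?_
  push_cast
  rw [div_eq_mul_inv]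
  ring_nf

end alternatingChooseSum

theorem stmt3_general (m i : ℕ) (hm : 1 ≤ m) (hi1 : 1 ≤ i) (k : ℕ) (hk : 1 ≤ k) :
    Summable (fun n : ℕ =>
      (n.factorial : ℝ) / (2 ^ (n + 1) * m * ∏ j ∈ Finset.range (n + 1), ((i : ℝ) / m + j))
        * Bnum m i (k - 1) n) ∧
    Tendsto (fun N => ∑ j ∈ Finset.range N, (-1 : ℝ) ^ j / ((m : ℝ) * j + i) ^ k) atTop
      (nhds (∑' n : ℕ,
        (n.factorial : ℝ) / (2 ^ (n + 1) * m * ∏ j ∈ Finset.range (n + 1), ((i : ℝ) / m + j))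
          * Bnum m i (k - 1) n)) := by
  obtain ⟨k, rfl⟩ := Nat.exists_eq_add_of_le' hk
  have hm' : (0 : ℝ) < m := by exact_mod_cast hm
  have hi' : (0 : ℝ) < i := by exact_mod_cast hi1
  set b : ℕ → ℝ := fun j => (((m : ℝ) * j + i) ^ (k + 1))⁻¹ with hb
  have hΔb : ∀ n j,
      (-1) ^ n * (Δ_[1])^[n] b j = alternatingChooseSum m (m * j + i) (k + 1) n :=
    neg_one_pow_mul_fwdDiff_iter_inv_pow (k + 1)
  have hb_lim : Tendsto b atTop (𝓝 0) :=
    tendsto_inv_atTop_zero.comp <| (tendsto_pow_atTop k.succ_ne_zero).comp <|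
      tendsto_atTop_add_const_right _ _ <| tendsto_natCast_atTop_atTop.const_mul_atTop hm'
  obtain ⟨L, hL, hbL⟩ := exists_hasSum_euler_transform
    (fun n j => hΔb n j ▸ alternatingChooseSum_nonneg hm'.le (by positivity) k n) hb_lim
  have hterm : ∀ n : ℕ,
      (n ! : ℝ) / (2 ^ (n + 1) * m * ∏ j ∈ range (n + 1), ((i : ℝ) / m + j))
          * Bnum m i (k + 1 - 1) n
        = (-1) ^ n * (Δ_[1])^[n] b 0 / 2 ^ (n + 1) := fun n => by
    rw [hΔb, Nat.cast_zero, mul_zero, zero_add, alternatingChooseSum_eq_factorial_div hm' hi',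
      Nat.add_sub_cancel, Bnum_eq_Breal]
    field_simp
  simp_rw [hterm, hL.tsum_eq]
  exact ⟨hL.summable, by simpa only [hb, div_eq_mul_inv] using hbL⟩

/-- For all integers `m ≥ 1`, `1 ≤ i ≤ m`, `k ≥ 1`, the alternating series
`M_k^{(m,i)} = ∑_{j=0}^{∞} (−1)^j/(m·j+i)^k` satisfies
`M_k^{(m,i)} = ∑_{n=0}^{∞} (n!/(2^{n+1} m (i/m)_{n+1})) B_{n,k−1}^{(m,i)}`, the series on
the right converging. -/
theorem stmt3 (m i : ℕ) (hm : 1 ≤ m) (hi1 : 1 ≤ i) (him : i ≤ m) (k : ℕ) (hk : 1 ≤ k) :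
    Summable (fun n : ℕ =>
      (n.factorial : ℝ) / (2 ^ (n + 1) * m * ∏ j ∈ Finset.range (n + 1), ((i : ℝ) / m + j))
        * Bnum m i (k - 1) n) ∧
    Tendsto (fun N => ∑ j ∈ Finset.range N, (-1 : ℝ) ^ j / ((m : ℝ) * j + i) ^ k) atTop
      (nhds (∑' n : ℕ,
        (n.factorial : ℝ) / (2 ^ (n + 1) * m * ∏ j ∈ Finset.range (n + 1), ((i : ℝ) / m + j))
          * Bnum m i (k - 1) n)) :=
  stmt3_general m i hm hi1 k hk
end

section
/- The Catalan constant K = ∑_{j=0}^{∞} (−1)^j/(2j+1)^2 satisfies K = ∑_{n=0}^{∞} n! · (H_{2n+1} − H_n/2) / (2 · (2n+1)!!), where H_n is the n-th harmonic number and (2n+1)!! = 1·3·5⋯(2n+1) is the double factorial. -/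
/-!
Euler's series transformation: since `∑_{n ≥ k} C(n,k) / 2^(n+1) = 1`, each term of the Catalan
series spreads over the rows `n ≥ k`, and absolute convergence lets us sum row by row instead. The
row sums `∑_k (-1)^k C(n,k) / (a+k)^2` are, up to the sign `(-1)^n`, the `n`-th forward difference
of `x ↦ x⁻²`, which by induction on `n` is `n! (∑_{i ≤ n} 1/(a+i)) / ∏_{i ≤ n} (a+i)`.
At `a = 1/2` the product is `(2n+1)!! / 2^(n+1)` and the sum is `2 (H_{2n+1} - H_n / 2)`.
-/

open Nat Finset

theorem sum_range_neg_one_pow_mul_choose_smul_eq_fwdDiff_iter {M G : Type*} [AddCommMonoid M]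
    [AddCommGroup G] (h : M) (f : M → G) (n : ℕ) (y : M) :
    ∑ k ∈ range (n + 1), ((-1 : ℤ) ^ k * n.choose k) • f (y + k • h)
      = (-1 : ℤ) ^ n • (fwdDiff h)^[n] f y := by
  rw [fwdDiff_iter_eq_sum_shift, smul_sum]
  refine sum_congr rfl fun k hk => ?_
  obtain ⟨j, rfl⟩ := Nat.exists_eq_add_of_le (Nat.lt_succ_iff.mp (mem_range.mp hk))
  rw [smul_smul, Nat.add_sub_cancel_left]
  congr 1
  rw [← mul_assoc, ← pow_add, add_assoc, ← two_mul, pow_add, pow_mul]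
  simp

section

variable {K : Type*} [Field K]

theorem prod_range_succ_add_natCast (a : K) (n : ℕ) :
    ∏ i ∈ range (n + 1), (a + i) = a * ∏ i ∈ range n, (a + 1 + i) := by
  rw [prod_range_succ', mul_comm]
  simp only [Nat.cast_zero, add_zero, Nat.cast_succ, add_right_comm, add_assoc]

theorem sum_range_succ_inv_add_natCast (a : K) (n : ℕ) :
    ∑ i ∈ range (n + 1), (a + i)⁻¹ = a⁻¹ + ∑ i ∈ range n, (a + 1 + i)⁻¹ := by
  rw [sum_range_succ', add_comm]
  simp only [Nat.cast_zero, add_zero, Nat.cast_succ, add_right_comm, add_assoc]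

theorem sum_inv_div_prod_add_one_sub {a : K} (n : ℕ) (ha : ∀ i : ℕ, a + i ≠ 0) :
    (∑ i ∈ range (n + 1), (a + 1 + i)⁻¹) / ∏ i ∈ range (n + 1), (a + 1 + i)
      - (∑ i ∈ range (n + 1), (a + i)⁻¹) / ∏ i ∈ range (n + 1), (a + i)
      = -(n + 1) * (∑ i ∈ range (n + 2), (a + i)⁻¹) / ∏ i ∈ range (n + 2), (a + i) := by
  have ha0 : a ≠ 0 := by simpa using ha 0
  have han : a + (n + 1) ≠ 0 := by exact_mod_cast ha (n + 1)
  have hP : ∏ i ∈ range (n + 1), (a + i) ≠ 0 := prod_ne_zero_iff.mpr fun i _ => ha i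
  have hprod : ∏ i ∈ range (n + 1), (a + 1 + i)
      = (∏ i ∈ range (n + 1), (a + i)) * (a + (n + 1)) / a := by
    rw [eq_div_iff ha0, mul_comm, ← prod_range_succ_add_natCast, prod_range_succ]
    push_cast; ring
  have hsum : ∑ i ∈ range (n + 1), (a + 1 + i)⁻¹
      = ∑ i ∈ range (n + 1), (a + i)⁻¹ + (a + (n + 1))⁻¹ - a⁻¹ := by
    rw [eq_sub_iff_add_eq, add_comm, ← sum_range_succ_inv_add_natCast, sum_range_succ]
    push_cast; ring
  rw [hprod, hsum, prod_range_succ (fun i : ℕ => a + i) (n + 1),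
    sum_range_succ (fun i : ℕ => (a + i)⁻¹) (n + 1)]
  push_cast
  generalize ∏ i ∈ range (n + 1), (a + i) = P at hP ⊢
  generalize ∑ i ∈ range (n + 1), (a + i)⁻¹ = S
  field_simp
  ring

theorem fwdDiff_iter_inv_sq {a : K} (n : ℕ) (ha : ∀ i : ℕ, a + i ≠ 0) :
    (fwdDiff 1)^[n] (fun x : K => (x ^ 2)⁻¹) a
      = (-1) ^ n * n !
          * ((∑ i ∈ range (n + 1), (a + i)⁻¹) / ∏ i ∈ range (n + 1), (a + i)) := by
  induction n generalizing a with
  | zero => simp [sq, div_eq_mul_inv]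
  | succ n ih =>
    have ha' : ∀ i : ℕ, a + 1 + i ≠ 0 := fun i => by
      rw [add_assoc, add_comm 1, ← Nat.cast_add_one]; exact ha (i + 1)
    rw [Function.iterate_succ_apply', fwdDiff, ih ha', ih ha, ← mul_sub,
      sum_inv_div_prod_add_one_sub n ha, factorial_succ]
    push_cast
    ring

theorem sum_range_neg_one_pow_mul_choose_mul_inv_add_sq {a : K} (n : ℕ)
    (ha : ∀ i : ℕ, a + i ≠ 0) :
    ∑ k ∈ range (n + 1), (-1) ^ k * n.choose k * ((a + k) ^ 2)⁻¹
      = n ! * (∑ i ∈ range (n + 1), (a + i)⁻¹) / ∏ i ∈ range (n + 1), (a + i) := by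
  have h :=
    sum_range_neg_one_pow_mul_choose_smul_eq_fwdDiff_iter (1 : K) (fun x => (x ^ 2)⁻¹) n a
  simp only [zsmul_eq_mul, nsmul_one, fwdDiff_iter_inv_sq n ha] at h
  push_cast at h
  rw [h, ← mul_assoc, ← mul_assoc, ← pow_add, ← two_mul, pow_mul]
  simp [mul_div_assoc]

end

theorem prod_range_inv_two_add_natCast (n : ℕ) :
    ∏ i ∈ range (n + 1), (2⁻¹ + i : ℝ) = (2 * n + 1)‼ / 2 ^ (n + 1) := by
  induction n with
  | zero => simp
  | succ n ih =>
    rw [prod_range_succ, ih, show 2 * (n + 1) + 1 = 2 * n + 1 + 2 by ring, doubleFactorial_add_two]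
    push_cast
    ring

theorem sum_range_neg_one_pow_mul_choose_div_odd_sq (n : ℕ) :
    ∑ k ∈ range (n + 1), (-1) ^ k * n.choose k / (2 * k + 1 : ℝ) ^ 2
      = 2 ^ n * n ! * (∑ k ∈ range (n + 1), (2 * k + 1 : ℝ)⁻¹) / (2 * n + 1)‼ := by
  have h := sum_range_neg_one_pow_mul_choose_mul_inv_add_sq (a := (2⁻¹ : ℝ)) n
    (fun i => by positivity)
  have hsq : ∀ k : ℕ, (-1) ^ k * n.choose k * ((2⁻¹ + k : ℝ) ^ 2)⁻¹
      = 4 * ((-1) ^ k * n.choose k / (2 * k + 1) ^ 2) := fun k => by field_simp; ring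
  have hinv : ∀ k : ℕ, (2⁻¹ + k : ℝ)⁻¹ = 2 * (2 * k + 1 : ℝ)⁻¹ := fun k => by
    field_simp; ring
  simp only [hsq, hinv, ← mul_sum, prod_range_inv_two_add_natCast] at h
  have hdf : (0 : ℝ) < (2 * n + 1)‼ := by exact_mod_cast doubleFactorial_pos _
  field_simp at h ⊢
  linear_combination h / 4

theorem harmonic_two_mul_add_one_sub_half (n : ℕ) :
    harmonic (2 * n + 1) - harmonic n / 2 = ∑ k ∈ range (n + 1), (2 * k + 1 : ℚ)⁻¹ := by
  induction n with
  | zero => simp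
  | succ n ih =>
    rw [show 2 * (n + 1) + 1 = 2 * n + 1 + 1 + 1 by ring, harmonic_succ (2 * n + 1 + 1),
      harmonic_succ (2 * n + 1), harmonic_succ n, sum_range_succ, ← ih]
    push_cast
    field_simp
    ring

theorem hasSum_choose_div_two_pow_succ (k : ℕ) :
    HasSum (fun n : ℕ => (n.choose k : ℝ) / 2 ^ (n + 1)) 1 := by
  have h := (hasSum_choose_mul_geometric_of_norm_lt_one (𝕜 := ℝ) k (r := 2⁻¹) (by norm_num))
    |>.mul_right (2⁻¹ ^ (k + 1))
  have hinit : ∑ i ∈ range k, (i.choose k : ℝ) / 2 ^ (i + 1) = 0 :=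
    sum_eq_zero fun i hi => by simp [choose_eq_zero_of_lt (mem_range.mp hi)]
  have hv : 1 / (1 - 2⁻¹ : ℝ) ^ (k + 1) * 2⁻¹ ^ (k + 1) = 1 := by field_simp; norm_num
  rw [hv] at h
  have hterm : ∀ m : ℕ, ((m + k).choose k : ℝ) * 2⁻¹ ^ m * 2⁻¹ ^ (k + 1)
      = ((m + k).choose k : ℝ) / 2 ^ (m + k + 1) := fun m => by
    rw [inv_pow, inv_pow, mul_assoc, ← mul_inv, ← pow_add, div_eq_mul_inv, add_assoc]
  simp only [hterm] at h
  rwa [← hasSum_nat_add_iff' k, hinit, sub_zero]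

theorem tsum_eq_tsum_tsum_mul_of_hasSum_one {ι κ : Type*} {c : ι → ℝ} {w : ι → κ → ℝ}
    (hc : Summable fun i => |c i|) (hw_nonneg : ∀ i j, 0 ≤ w i j) (hw : ∀ i, HasSum (w i) 1) :
    ∑' i, c i = ∑' j, ∑' i, c i * w i j := by
  have habs : Summable (Function.uncurry fun i j => |c i * w i j|) := by
    refine (summable_prod_of_nonneg fun _ => abs_nonneg _).mpr ⟨fun i => ?_, ?_⟩
    · simpa [abs_mul, abs_of_nonneg (hw_nonneg i _)] using ((hw i).mul_left |c i|).summable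
    · simpa [abs_mul, abs_of_nonneg (hw_nonneg _ _), tsum_mul_left, (hw _).tsum_eq] using hc
  rw [(habs.of_abs).tsum_comm]
  exact tsum_congr fun i => by rw [tsum_mul_left, (hw i).tsum_eq, mul_one]

theorem summable_one_div_two_mul_add_one_sq :
    Summable fun k : ℕ => 1 / (2 * k + 1 : ℝ) ^ 2 := by
  refine ((summable_nat_add_iff 1).mpr (Real.summable_one_div_nat_pow.mpr one_lt_two))
    |>.of_nonneg_of_le (fun _ => by positivity) fun k => ?_
  push_cast
  gcongr
  linarith

theorem sum_range_neg_one_pow_div_odd_sq_mul_choose_div_two_pow (n : ℕ) :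
    ∑ k ∈ range (n + 1), (-1 : ℝ) ^ k / (2 * k + 1) ^ 2 * (n.choose k / 2 ^ (n + 1))
      = n ! * ((harmonic (2 * n + 1) : ℝ) - (harmonic n : ℝ) / 2) / (2 * (2 * n + 1)‼) := by
  have hrow : ∑ k ∈ range (n + 1), (-1 : ℝ) ^ k / (2 * k + 1) ^ 2 * (n.choose k / 2 ^ (n + 1))
      = (∑ k ∈ range (n + 1), (-1) ^ k * n.choose k / (2 * k + 1 : ℝ) ^ 2) / 2 ^ (n + 1) := by
    rw [sum_div]
    exact sum_congr rfl fun k _ => by ring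
  have hharm : (harmonic (2 * n + 1) : ℝ) - (harmonic n : ℝ) / 2
      = ∑ k ∈ range (n + 1), (2 * k + 1 : ℝ)⁻¹ := by
    have h := congrArg (Rat.cast (K := ℝ)) (harmonic_two_mul_add_one_sub_half n)
    push_cast at h
    exact h
  rw [hrow, sum_range_neg_one_pow_mul_choose_div_odd_sq, hharm]
  have hdf : (0 : ℝ) < (2 * n + 1)‼ := by exact_mod_cast doubleFactorial_pos _
  field_simp
  ring

/-- The Catalan constant `K = ∑_{j=0}^{∞} (−1)^j/(2j+1)^2` satisfies
`K = ∑_{n=0}^{∞} n!·(H_{2n+1} − H_n/2)/(2·(2n+1)!!)`, where `H_n` is the `n`-th harmonic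
number and `(2n+1)!!` is the double factorial. -/
theorem stmt5 :
    (∑' j : ℕ, (-1 : ℝ) ^ j / (2 * (j : ℝ) + 1) ^ 2)
      = ∑' n : ℕ, (n.factorial : ℝ) * ((harmonic (2 * n + 1) : ℝ) - (harmonic n : ℝ) / 2)
          / (2 * (Nat.doubleFactorial (2 * n + 1) : ℝ)) := by
  have hc : Summable fun k : ℕ => |(-1 : ℝ) ^ k / (2 * k + 1) ^ 2| := by
    refine summable_one_div_two_mul_add_one_sq.congr fun k => ?_
    rw [abs_div, abs_of_pos (by positivity : (0 : ℝ) < (2 * k + 1) ^ 2)]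
    simp
  rw [tsum_eq_tsum_tsum_mul_of_hasSum_one hc (fun _ _ => by positivity)
    hasSum_choose_div_two_pow_succ]
  refine tsum_congr fun n => ?_
  rw [tsum_eq_sum (s := range (n + 1)) fun k hk => by
    rw [choose_eq_zero_of_lt (by simpa using hk), Nat.cast_zero, zero_div, mul_zero]]
  exact sum_range_neg_one_pow_div_odd_sq_mul_choose_div_two_pow n
end

section
/- For every y ∈ (−1,1), ∑_{j=0}^{∞} y^j · ζ̂(j) = B(1/2, 1−y, 1+y), where ζ̂(0) = 1/2, ζ̂(j) = ∑_{n=1}^{∞} (−1)^{n−1}/n^j for j ≥ 1, and B(x,a,b) = ∫_0^x t^{a−1}(1−t)^{b−1} dt is the incomplete beta function; the series on the left converges for |y| < 1. -/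
open Filter MeasureTheory Set Real
open scoped Nat Topology

/-!
On `x > 0` the logistic density `G(x) = e^{-x}/(1+e^{-x})^2` expands as
`∑_{n ≥ 0} (-1)^n (n+1) e^{-(n+1)x}`, whose partial sums are bounded by `2(1 + 1/x) e^{-x}`.
Integrating termwise against `x^k` (dominated convergence, `k ≥ 1`) gives
`∫_0^∞ x^k G(x) dx = k! ζ̂(k)`. Summing `y^k/k!` times these moments gives
`∑ y^k ζ̂(k) = ∫_0^∞ e^{yx} G(x) dx`, and the substitution `t = 1/(1+e^x)` turns this into
`∫_0^{1/2} t^{-y} (1-t)^y dt`; at `y = 0` the same substitution gives `∫_0^∞ G = 1/2 = ζ̂(0)`.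
-/

noncomputable def logisticDensity (x : ℝ) : ℝ := exp (-x) / (1 + exp (-x)) ^ 2

lemma logisticDensity_pos (x : ℝ) : 0 < logisticDensity x := by
  unfold logisticDensity; positivity

lemma logisticDensity_le_exp_neg (x : ℝ) : logisticDensity x ≤ exp (-x) :=
  div_le_self (exp_pos _).le (one_le_pow₀ (by linarith [exp_pos (-x)]))

@[fun_prop]
lemma continuous_logisticDensity : Continuous logisticDensity := by
  unfold logisticDensity
  exact Continuous.div (by fun_prop) (by fun_prop) fun x => by positivity

lemma logisticDensity_eq_exp_div (x : ℝ) : logisticDensity x = exp x / (1 + exp x) ^ 2 := by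
  rw [logisticDensity, exp_neg]
  field_simp
  ring

lemma integral_pow_mul_exp_neg_mul_Ioi (k : ℕ) {r : ℝ} (hr : 0 < r) :
    ∫ x in Ioi (0 : ℝ), x ^ k * exp (-(r * x)) = k ! / r ^ (k + 1) := by
  have h := integral_rpow_mul_exp_neg_mul_Ioi (a := k + 1) (by positivity) hr
  rw [add_sub_cancel_right, Gamma_nat_eq_factorial, ← Nat.cast_succ, rpow_natCast] at h
  simp_rw [rpow_natCast] at h
  rw [h, one_div_pow, one_div_mul_eq_div]

lemma integrableOn_pow_mul_exp_neg_mul_Ioi (k : ℕ) {r : ℝ} (hr : 0 < r) :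
    IntegrableOn (fun x => x ^ k * exp (-(r * x))) (Ioi 0) :=
  Integrable.of_integral_ne_zero <| by
    rw [integral_pow_mul_exp_neg_mul_Ioi k hr]; positivity

lemma sum_range_succ_mul_pow_mul_one_sub_sq {R : Type*} [CommRing R] (u : R) (N : ℕ) :
    (∑ n ∈ Finset.range N, ((n : R) + 1) * u ^ n) * (1 - u) ^ 2
      = 1 - u ^ N * (1 + N * (1 - u)) := by
  induction N with
  | zero => simp
  | succ N ih =>
    rw [Finset.sum_range_succ, add_mul, ih]
    push_cast
    ring

noncomputable def logisticPartialSum (N : ℕ) (x : ℝ) : ℝ :=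
  ∑ n ∈ Finset.range N, (-1) ^ n * ((n : ℝ) + 1) * exp (-((n + 1) * x))

lemma logisticPartialSum_eq (N : ℕ) (x : ℝ) :
    logisticPartialSum N x
      = logisticDensity x * (1 - (-exp (-x)) ^ N * (1 + N * (1 + exp (-x)))) := by
  have h := sum_range_succ_mul_pow_mul_one_sub_sq (-exp (-x)) N
  rw [sub_neg_eq_add] at h
  rw [logisticDensity, ← h, div_mul_eq_mul_div, eq_div_iff (by positivity), ← mul_assoc]
  congr 1
  rw [logisticPartialSum, Finset.mul_sum]
  refine Finset.sum_congr rfl fun n _ => ?_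
  rw [show -((n + 1) * x) = -x + n * -x by ring, exp_add, exp_nat_mul, neg_pow]
  ring

lemma tendsto_logisticPartialSum {x : ℝ} (hx : 0 < x) :
    Tendsto (logisticPartialSum · x) atTop (𝓝 (logisticDensity x)) := by
  have hw : |-exp (-x)| < 1 := by
    rw [abs_neg, abs_of_pos (exp_pos _), exp_lt_one_iff]; linarith
  have h := (tendsto_pow_atTop_nhds_zero_of_abs_lt_one hw).add
    ((tendsto_self_mul_const_pow_of_abs_lt_one hw).mul_const (1 + exp (-x)))
  have h' := ((tendsto_const_nhds (x := (1 : ℝ))).sub h).const_mul (logisticDensity x)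
  simp only [zero_mul, add_zero, sub_zero, mul_one] at h'
  refine h'.congr fun N => ?_
  rw [logisticPartialSum_eq]
  ring

lemma nat_mul_exp_neg_pow_le {x : ℝ} (hx : 0 < x) (N : ℕ) : N * exp (-x) ^ N ≤ x⁻¹ := by
  rw [← exp_nat_mul, mul_neg, exp_neg, ← div_eq_mul_inv, div_le_iff₀ (exp_pos _)]
  calc (N : ℝ) = x⁻¹ * (N * x) := by field_simp
    _ ≤ x⁻¹ * exp (N * x) := by gcongr; linarith [add_one_le_exp (N * x)]

lemma abs_logisticPartialSum_le {x : ℝ} (hx : 0 < x) (N : ℕ) :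
    |logisticPartialSum N x| ≤ 2 * (1 + x⁻¹) * exp (-x) := by
  have hNw := nat_mul_exp_neg_pow_le hx N
  set w := exp (-x)
  have hw0 : 0 < w := exp_pos _
  have hw1 : w < 1 := by rw [exp_lt_one_iff]; linarith
  have hwN : w ^ N ≤ 1 := pow_le_one₀ hw0.le hw1.le
  have hrem : |1 - (-w) ^ N * (1 + N * (1 + w))| ≤ 2 * (1 + x⁻¹) :=
    calc |1 - (-w) ^ N * (1 + N * (1 + w))| ≤ 1 + w ^ N * (1 + N * (1 + w)) := by
          refine (abs_sub _ _).trans_eq ?_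
          rw [abs_one, abs_mul, abs_pow, abs_neg, abs_of_pos hw0, abs_of_pos (by positivity)]
      _ = 1 + w ^ N + N * w ^ N * (1 + w) := by ring
      _ ≤ 1 + 1 + x⁻¹ * 2 := by
          gcongr
          linarith
      _ = 2 * (1 + x⁻¹) := by ring
  rw [logisticPartialSum_eq, abs_mul, abs_of_pos (logisticDensity_pos x), mul_comm]
  exact mul_le_mul hrem (logisticDensity_le_exp_neg x) (logisticDensity_pos x).le (by positivity)

@[fun_prop]
lemma continuous_logisticPartialSum (N : ℕ) : Continuous (logisticPartialSum N) := by
  unfold logisticPartialSum; fun_prop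

lemma integral_pow_mul_logisticPartialSum (k N : ℕ) :
    ∫ x in Ioi (0 : ℝ), x ^ k * logisticPartialSum N x
      = k ! * ∑ j ∈ Finset.range N, (-1) ^ j / ((j : ℝ) + 1) ^ k := by
  have hterm : ∀ (n : ℕ) (x : ℝ), x ^ k * ((-1) ^ n * ((n : ℝ) + 1) * exp (-((n + 1) * x)))
      = (-1) ^ n * (n + 1) * (x ^ k * exp (-((n + 1) * x))) := fun n x => by ring
  simp_rw [logisticPartialSum, Finset.mul_sum, hterm]
  rw [integral_finsetSum _ fun n _ =>
    (integrableOn_pow_mul_exp_neg_mul_Ioi k (by positivity)).const_mul _]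
  refine Finset.sum_congr rfl fun n _ => ?_
  rw [integral_const_mul, integral_pow_mul_exp_neg_mul_Ioi k (by positivity), pow_succ]
  field_simp

lemma tendsto_sum_range_alternating_div_pow {k : ℕ} (hk : 1 ≤ k) :
    Tendsto (fun N => ∑ j ∈ Finset.range N, (-1 : ℝ) ^ j / ((j : ℝ) + 1) ^ k) atTop
      (𝓝 ((∫ x in Ioi (0 : ℝ), x ^ k * logisticDensity x) / k !)) := by
  have hlim : Tendsto (fun N => ∫ x in Ioi (0 : ℝ), x ^ k * logisticPartialSum N x) atTop
      (𝓝 (∫ x in Ioi (0 : ℝ), x ^ k * logisticDensity x)) := by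
    refine tendsto_integral_of_dominated_convergence
      (fun x => 2 * (x ^ k * exp (-(1 * x))) + 2 * (x ^ (k - 1) * exp (-(1 * x))))
      (fun N => by fun_prop) ?_ (fun N => ?_) ?_
    · exact ((integrableOn_pow_mul_exp_neg_mul_Ioi k one_pos).const_mul 2).add
        ((integrableOn_pow_mul_exp_neg_mul_Ioi (k - 1) one_pos).const_mul 2)
    · filter_upwards [ae_restrict_mem measurableSet_Ioi] with x (hx : 0 < x)
      obtain ⟨j, rfl⟩ : ∃ j, k = j + 1 := ⟨k - 1, by omega⟩
      rw [norm_mul, norm_pow, Real.norm_of_nonneg hx.le, Real.norm_eq_abs]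
      calc x ^ (j + 1) * |logisticPartialSum N x| ≤ x ^ (j + 1) * (2 * (1 + x⁻¹) * exp (-x)) := by
            gcongr; exact abs_logisticPartialSum_le hx N
        _ = _ := by simp only [one_mul, add_tsub_cancel_right]; field_simp; ring
    · filter_upwards [ae_restrict_mem measurableSet_Ioi] with x (hx : 0 < x)
      exact (tendsto_logisticPartialSum hx).const_mul _
  have hk! : (k ! : ℝ) ≠ 0 := by positivity
  simpa [integral_pow_mul_logisticPartialSum, mul_div_cancel_left₀ _ hk!] using
    hlim.div_const (k ! : ℝ)

lemma hasSum_pow_mul_moment_logisticDensity {y : ℝ} (hy : |y| < 1) :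
    HasSum (fun j : ℕ => y ^ j * ((∫ x in Ioi (0 : ℝ), x ^ j * logisticDensity x) / j !))
      (∫ x in Ioi (0 : ℝ), exp (y * x) * logisticDensity x) := by
  have hexp (z : ℝ) : HasSum (fun j : ℕ => z ^ j / j !) (exp z) := by
    rw [exp_eq_exp_ℝ]; exact NormedSpace.expSeries_div_hasSum_exp z
  have h := hasSum_integral_of_dominated_convergence (μ := volume.restrict (Ioi 0))
    (F := fun j x => (y * x) ^ j / j ! * logisticDensity x)
    (bound := fun j x => (|y| * x) ^ j / j ! * exp (-x)) (fun j => by fun_prop) (fun j => ?_)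
    (ae_of_all _ fun x => (Real.summable_pow_div_factorial _).mul_right _) ?_
    (ae_of_all _ fun x => (hexp _).mul_right _)
  · have hterm (j : ℕ) : ∫ x in Ioi (0 : ℝ), (y * x) ^ j / j ! * logisticDensity x
        = y ^ j * ((∫ x in Ioi (0 : ℝ), x ^ j * logisticDensity x) / j !) := by
      rw [← integral_div, ← integral_const_mul]
      congr 1 with x
      ring
    simpa only [hterm] using h
  · filter_upwards [ae_restrict_mem measurableSet_Ioi] with x (hx : 0 < x)
    rw [norm_mul, norm_div, norm_pow, norm_mul, Real.norm_of_nonneg hx.le, Real.norm_eq_abs,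
      RCLike.norm_natCast, Real.norm_of_nonneg (logisticDensity_pos x).le]
    gcongr
    exact logisticDensity_le_exp_neg x
  · have hsum (x : ℝ) : ∑' j : ℕ, (|y| * x) ^ j / j ! * exp (-x) = exp (-(1 - |y|) * x) := by
      rw [((hexp _).mul_right _).tsum_eq, ← exp_add]
      ring_nf
    simp_rw [hsum]
    exact exp_neg_integrableOn_Ioi 0 (by linarith)

lemma strictAnti_inv_one_add_exp : StrictAnti fun x : ℝ => (1 + exp x)⁻¹ :=
  fun _ _ hab => inv_strictAnti₀ (by positivity) (by gcongr)

lemma image_inv_one_add_exp_Ioi : (fun x : ℝ => (1 + exp x)⁻¹) '' Ioi 0 = Ioo 0 (1 / 2) := by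
  ext t
  constructor
  · rintro ⟨x, hx : 0 < x, rfl⟩
    refine ⟨by positivity, ?_⟩
    simpa [one_add_one_eq_two] using strictAnti_inv_one_add_exp hx
  · rintro ⟨ht0, ht2⟩
    refine ⟨log ((1 - t) / t), log_pos ((one_lt_div ht0).2 (by linarith)), ?_⟩
    dsimp only
    rw [exp_log (div_pos (by linarith) ht0)]
    field_simp
    ring

lemma integral_exp_mul_logisticDensity_Ioi (y : ℝ) :
    ∫ x in Ioi (0 : ℝ), exp (y * x) * logisticDensity x
      = ∫ t in (0 : ℝ)..1 / 2, t ^ (-y) * (1 - t) ^ y := by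
  rw [intervalIntegral.integral_of_le (by norm_num), integral_Ioc_eq_integral_Ioo,
    ← image_inv_one_add_exp_Ioi,
    integral_image_eq_integral_abs_deriv_smul (f := fun x => (1 + exp x)⁻¹) measurableSet_Ioi
      (fun x _ => (((hasDerivAt_exp x).const_add 1).inv (by positivity)).hasDerivWithinAt)
      strictAnti_inv_one_add_exp.injective.injOn]
  refine setIntegral_congr_fun measurableSet_Ioi fun x _ => ?_
  have hE : 0 < 1 + exp x := by positivity
  have h1 : 1 - (1 + exp x)⁻¹ = exp x * (1 + exp x)⁻¹ := by field_simp; ring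
  simp only [smul_eq_mul, abs_div, abs_neg, abs_of_pos (exp_pos x), abs_pow, abs_of_pos hE, h1]
  rw [inv_rpow hE.le, rpow_neg hE.le, inv_inv, mul_rpow (exp_pos x).le (inv_nonneg.2 hE.le),
    inv_rpow hE.le, ← exp_mul, logisticDensity_eq_exp_div, mul_comm x y]
  have : 0 < (1 + exp x) ^ y := rpow_pos_of_pos hE y
  field_simp

/-- For every `y ∈ (−1,1)`, `∑_{j=0}^{∞} y^j ζ̂(j) = B(1/2, 1−y, 1+y)`,
where `ζ̂(0) = 1/2`, `ζ̂(j) = ∑_{n=1}^{∞} (−1)^{n−1}/n^j` for `j ≥ 1` (the limit of the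
partial sums of this convergent alternating series), and
`B(x,a,b) = ∫_0^x t^{a−1}(1−t)^{b−1} dt` is the incomplete beta function; the series on
the left converges for `|y| < 1`. -/
theorem stmt16 (zh : ℕ → ℝ) (h0 : zh 0 = 1 / 2)
    (hz : ∀ k, 1 ≤ k →
      Tendsto (fun N => ∑ j ∈ Finset.range N, (-1 : ℝ) ^ j / ((j : ℝ) + 1) ^ k) atTop
        (nhds (zh k)))
    (y : ℝ) (hy : y ∈ Set.Ioo (-1 : ℝ) 1) :
    Summable (fun j : ℕ => y ^ j * zh j) ∧
    (∑' j : ℕ, y ^ j * zh j)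
      = ∫ t in (0 : ℝ)..(1 / 2), t ^ (1 - y - 1) * (1 - t) ^ (1 + y - 1) := by
  have hmoment : ∀ j, zh j = (∫ x in Ioi (0 : ℝ), x ^ j * logisticDensity x) / j ! := by
    rintro (_ | k)
    · simpa [h0] using (integral_exp_mul_logisticDensity_Ioi 0).symm
    · exact tendsto_nhds_unique (hz _ k.succ_pos) (tendsto_sum_range_alternating_div_pow k.succ_pos)
  have hsum := hasSum_pow_mul_moment_logisticDensity (abs_lt.2 hy)
  simp only [← hmoment] at hsum
  refine ⟨hsum.summable, ?_⟩
  rw [hsum.tsum_eq, integral_exp_mul_logisticDensity_Ioi, sub_sub_cancel_left, add_sub_cancel_left]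
end
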